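/- Let Ψ = (ψ_n) be a Schauder basis of a Banach space X with dual system (ψ*_n). Then X and Ψ satisfy the inequality Σ_{n∈A} |a_n| ≤ V·|A|^r·‖Σ_{n∈B} a_n ψ_n‖ for all finite A ⊂ B ⊂ ℕ and scalars (a_n) if and only if for all finite A ⊂ ℕ and all unimodular scalars (ε_n), ‖Σ_{n∈A} ε_n ψ*_n‖_{X*} ≤ V·|A|^r. -/

import Mathlib

/-!
Pairing `Σ_{n∈A} ε_n ψ*_n` with `Σ_{n∈B} a_n ψ_n` gives `Σ_{n∈A∩B} ε_n a_n` by biorthogonality.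
Choosing `ε_n` to be the conjugate phase of `a_n` turns this pairing into `Σ_{n∈A} |a_n|`, so the
dual bound implies the primal one. Conversely, the primal inequality applied to `A ∩ B ⊆ B` bounds
the functional on the span of the basis, which is dense, hence bounds its norm.
-/

open Finset

theorem ContinuousLinearMap.opNorm_le_of_dense {𝕜 : Type*} [NontriviallyNormedField 𝕜]
    {E F : Type*} [NormedAddCommGroup E] [NormedSpace 𝕜 E] [NormedAddCommGroup F]
    [NormedSpace 𝕜 F] (f : E →L[𝕜] F) {s : Set E} (hs : Dense s) {C : ℝ} (hC : 0 ≤ C)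
    (h : ∀ x ∈ s, ‖f x‖ ≤ C * ‖x‖) : ‖f‖ ≤ C :=
  f.opNorm_le_bound hC <| hs.induction h (isClosed_le (by fun_prop) (by fun_prop))

section Biorthogonal

variable {𝕜 : Type*} [RCLike 𝕜] {X : Type*} [NormedAddCommGroup X] [NormedSpace 𝕜 X]
  {ι : Type*} [DecidableEq ι] {ψ : ι → X} {ψs : ι → X →L[𝕜] 𝕜}

theorem biorthogonal_apply_sum_smul (hbio : ∀ m n, ψs m (ψ n) = if m = n then 1 else 0)
    (B : Finset ι) (a : ι → 𝕜) (n : ι) :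
    ψs n (∑ m ∈ B, a m • ψ m) = if n ∈ B then a n else 0 := by
  simp only [map_sum, map_smul, hbio, smul_eq_mul, mul_ite, mul_one, mul_zero, sum_ite_eq]

theorem biorthogonal_sum_smul_apply_sum_smul
    (hbio : ∀ m n, ψs m (ψ n) = if m = n then 1 else 0) (A B : Finset ι) (ε a : ι → 𝕜) :
    (∑ n ∈ A, ε n • ψs n) (∑ m ∈ B, a m • ψ m) = ∑ n ∈ A ∩ B, ε n * a n := by
  simp only [_root_.sum_apply, _root_.smul_apply, biorthogonal_apply_sum_smul hbio,
    smul_eq_mul, mul_ite, mul_zero, sum_ite_mem]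

theorem sum_norm_le_of_norm_sum_smul_le (hbio : ∀ m n, ψs m (ψ n) = if m = n then 1 else 0)
    {A B : Finset ι} (hAB : A ⊆ B) {C : ℝ}
    (hC : ∀ ε : ι → 𝕜, (∀ n, ‖ε n‖ = 1) → ‖∑ n ∈ A, ε n • ψs n‖ ≤ C) (a : ι → 𝕜) :
    ∑ n ∈ A, ‖a n‖ ≤ C * ‖∑ n ∈ B, a n • ψ n‖ := by
  choose ε hε_norm hε_mul using fun n ↦ RCLike.exists_norm_eq_mul_self (a n)
  have hpair : (∑ n ∈ A, ε n • ψs n) (∑ m ∈ B, a m • ψ m) = ((∑ n ∈ A, ‖a n‖ : ℝ) : 𝕜) := by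
    rw [biorthogonal_sum_smul_apply_sum_smul hbio, inter_eq_left.mpr hAB, RCLike.ofReal_sum]
    exact sum_congr rfl fun n _ ↦ (hε_mul n).symm
  calc ∑ n ∈ A, ‖a n‖ = ‖(∑ n ∈ A, ε n • ψs n) (∑ m ∈ B, a m • ψ m)‖ := by
        rw [hpair, RCLike.norm_ofReal, abs_of_nonneg (by positivity)]
    _ ≤ ‖∑ n ∈ A, ε n • ψs n‖ * ‖∑ m ∈ B, a m • ψ m‖ := ContinuousLinearMap.le_opNorm _ _
    _ ≤ C * ‖∑ n ∈ B, a n • ψ n‖ := by gcongr; exact hC ε hε_norm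

theorem norm_sum_smul_le_of_sum_norm_le (hbio : ∀ m n, ψs m (ψ n) = if m = n then 1 else 0)
    (hdense : Dense (Submodule.span 𝕜 (Set.range ψ) : Set X)) {A : Finset ι} {C : ℝ}
    (hC₀ : 0 ≤ C) (hC : ∀ (B : Finset ι) (a : ι → 𝕜),
      ∑ n ∈ A ∩ B, ‖a n‖ ≤ C * ‖∑ n ∈ B, a n • ψ n‖)
    {ε : ι → 𝕜} (hε : ∀ n, ‖ε n‖ = 1) : ‖∑ n ∈ A, ε n • ψs n‖ ≤ C := by
  refine ContinuousLinearMap.opNorm_le_of_dense _ hdense hC₀ fun x hx ↦ ?_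
  obtain ⟨c, rfl⟩ := Finsupp.mem_span_range_iff_exists_finsupp.mp hx
  rw [Finsupp.sum, biorthogonal_sum_smul_apply_sum_smul hbio]
  calc ‖∑ n ∈ A ∩ c.support, ε n * c n‖ ≤ ∑ n ∈ A ∩ c.support, ‖ε n * c n‖ := norm_sum_le _ _
    _ = ∑ n ∈ A ∩ c.support, ‖c n‖ := by simp only [norm_mul, hε, one_mul]
    _ ≤ C * ‖∑ n ∈ c.support, c n • ψ n‖ := hC _ _

end Biorthogonal

theorem stmt_9 {𝕜 : Type*} [RCLike 𝕜] {X : Type*} [NormedAddCommGroup X]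
    [NormedSpace 𝕜 X]
    (ψ : ℕ → X) (ψs : ℕ → X →L[𝕜] 𝕜)
    (hbio : ∀ m n, ψs m (ψ n) = if m = n then 1 else 0)
    (hdense : Dense (Submodule.span 𝕜 (Set.range ψ) : Set X))
    (V r : ℝ) (hV : 1 ≤ V) (hr : 0 < r) :
    (∀ (A B : Finset ℕ), A ⊆ B → ∀ a : ℕ → 𝕜,
        ∑ n ∈ A, ‖a n‖ ≤ V * (A.card : ℝ) ^ r * ‖∑ n ∈ B, a n • ψ n‖) ↔
      (∀ (A : Finset ℕ) (ε : ℕ → 𝕜), (∀ n, ‖ε n‖ = 1) →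
        ‖∑ n ∈ A, ε n • ψs n‖ ≤ V * (A.card : ℝ) ^ r) := by
  constructor
  · intro h A ε hε
    refine norm_sum_smul_le_of_sum_norm_le hbio hdense
      (mul_nonneg (zero_le_one.trans hV) (by positivity)) (fun B a ↦ ?_) hε
    calc ∑ n ∈ A ∩ B, ‖a n‖ ≤ V * ((A ∩ B).card : ℝ) ^ r * ‖∑ n ∈ B, a n • ψ n‖ :=
          h _ _ inter_subset_right a
      _ ≤ V * (A.card : ℝ) ^ r * ‖∑ n ∈ B, a n • ψ n‖ := by
          have : ((A ∩ B).card : ℝ) ≤ A.card := by exact_mod_cast card_le_card inter_subset_left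
          gcongr
  · intro h A B hAB a
    exact sum_norm_le_of_norm_sum_smul_le hbio hAB (h A) a
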